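/- (Corollary 2, minimal observation IOC.) Let S ⊆ {1,…,r} and suppose the full-horizon KKT conditions hold for some ω ∈ ℝ^r with ω ≠ 0 and ω_i = 0 for all i ∉ S, with some costates λ ∈ (ℝ^n)^T. Fix a starting time 1 ≤ t < T and suppose the set L = { l : 1 ≤ l ≤ T−t+1 and rank H(t,l) = r+n−1 } is nonempty; let l_min(t) be its minimum. Then every (ω̂, λ̂) ∈ ℝ^r × ℝ^n in the kernel of H(t, l_min(t)) with (ω̂, λ̂) ≠ 0 satisfies ω̂ = c·ω for some constant c ≠ 0. -/

import Mathlib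

open Matrix

noncomputable section

variable {n m r : ℕ}

/-- Block upper bidiagonal matrix `F_x(t,l)` (0-based block indices): diagonal blocks are
`I_n`, and block `(i, i+1)` is `-(A (t+i))ᵀ`. -/
def Fx (A : ℕ → Matrix (Fin n) (Fin n) ℝ) (t l : ℕ) :
    Matrix (Fin l × Fin n) (Fin l × Fin n) ℝ :=
  fun ip jq =>
    if ip.1 = jq.1 then (if ip.2 = jq.2 then (1 : ℝ) else 0)
    else if (jq.1 : ℕ) = (ip.1 : ℕ) + 1 then -((A (t + (ip.1 : ℕ)))ᵀ ip.2 jq.2)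
    else 0

/-- Block diagonal matrix `F_u(t,l)` with diagonal blocks `(B (t+i))ᵀ`. -/
def Fu (B : ℕ → Matrix (Fin n) (Fin m) ℝ) (t l : ℕ) :
    Matrix (Fin l × Fin m) (Fin l × Fin n) ℝ :=
  fun ip jq => if ip.1 = jq.1 then (B (t + (ip.1 : ℕ)))ᵀ ip.2 jq.2 else 0

/-- Vertical stack `Φ_x(t,l)` of the blocks `(G (t+i))ᵀ`. -/
def Phix (G : ℕ → Matrix (Fin r) (Fin n) ℝ) (t l : ℕ) :
    Matrix (Fin l × Fin n) (Fin r) ℝ :=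
  fun ip q => (G (t + (ip.1 : ℕ)))ᵀ ip.2 q

/-- Vertical stack `Φ_u(t,l)` of the blocks `(D (t+i))ᵀ`. -/
def Phiu (D : ℕ → Matrix (Fin r) (Fin m) ℝ) (t l : ℕ) :
    Matrix (Fin l × Fin m) (Fin r) ℝ :=
  fun ip q => (D (t + (ip.1 : ℕ)))ᵀ ip.2 q

/-- `V(t,l)`: all `n×n` blocks zero except the last one, which is `(A (t+l-1))ᵀ`. -/
def Vm (A : ℕ → Matrix (Fin n) (Fin n) ℝ) (t l : ℕ) :
    Matrix (Fin l × Fin n) (Fin n) ℝ :=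
  fun ip q => if (ip.1 : ℕ) = l - 1 then (A (t + l - 1))ᵀ ip.2 q else 0

/-- `H₁(t,l) = F_u(t,l) · F_x(t,l)⁻¹ · Φ_x(t,l) + Φ_u(t,l)`. -/
def H1m (A : ℕ → Matrix (Fin n) (Fin n) ℝ) (B : ℕ → Matrix (Fin n) (Fin m) ℝ)
    (G : ℕ → Matrix (Fin r) (Fin n) ℝ) (D : ℕ → Matrix (Fin r) (Fin m) ℝ) (t l : ℕ) :
    Matrix (Fin l × Fin m) (Fin r) ℝ :=
  Fu B t l * (Fx A t l)⁻¹ * Phix G t l + Phiu D t l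

/-- `H₂(t,l) = F_u(t,l) · F_x(t,l)⁻¹ · V(t,l)`. -/
def H2m (A : ℕ → Matrix (Fin n) (Fin n) ℝ) (B : ℕ → Matrix (Fin n) (Fin m) ℝ) (t l : ℕ) :
    Matrix (Fin l × Fin m) (Fin n) ℝ :=
  Fu B t l * (Fx A t l)⁻¹ * Vm A t l

/-- The recovery matrix `H(t,l) = [H₁(t,l)  H₂(t,l)]`. -/
def Hm (A : ℕ → Matrix (Fin n) (Fin n) ℝ) (B : ℕ → Matrix (Fin n) (Fin m) ℝ)
    (G : ℕ → Matrix (Fin r) (Fin n) ℝ) (D : ℕ → Matrix (Fin r) (Fin m) ℝ) (t l : ℕ) :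
    Matrix (Fin l × Fin m) (Fin r ⊕ Fin n) ℝ :=
  fromCols (H1m A B G D t l) (H2m A B t l)

/-- Stack the vectors `lam t, lam (t+1), …, lam (t+l-1)` into a vector in `ℝ^{nl}`. -/
def stackVec (lam : ℕ → Fin n → ℝ) (t l : ℕ) : Fin l × Fin n → ℝ :=
  fun ip => lam (t + (ip.1 : ℕ)) ip.2

/-- Full-horizon KKT conditions for the weight vector `ω` with costates `lam 1, …, lam T`. -/
def KKT (A : ℕ → Matrix (Fin n) (Fin n) ℝ) (B : ℕ → Matrix (Fin n) (Fin m) ℝ)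
    (G : ℕ → Matrix (Fin r) (Fin n) ℝ) (D : ℕ → Matrix (Fin r) (Fin m) ℝ) (T : ℕ)
    (ω : Fin r → ℝ) (lam : ℕ → Fin n → ℝ) : Prop :=
  -(Fx A 1 T *ᵥ stackVec lam 1 T) + Phix G 1 T *ᵥ ω = 0 ∧
    Fu B 1 T *ᵥ stackVec lam 1 T + Phiu D 1 T *ᵥ ω = 0

/-- The natural identification of `ℝ^{(l+1)·ι}`-indices with `ℝ^{l·ι} × ℝ^{ι}`-indices. -/
def splitIdx (l : ℕ) (ι : Type*) : Fin (l + 1) × ι → (Fin l × ι) ⊕ ι :=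
  fun ip => if h : (ip.1 : ℕ) < l then Sum.inl (⟨ip.1, h⟩, ip.2) else Sum.inr ip.2

/-!
The KKT conditions say that the costates, extended by `λ_{T+1} = 0`, obey the backward
recursion `λ_k = A_kᵀ λ_{k+1} + G_kᵀ ω` together with `B_kᵀ λ_k + D_kᵀ ω = 0` for `k ≤ T`.
On a window `t, …, t+l-1` inside the horizon, `F_x(t,l)` is unit upper triangular, hence
invertible, and eliminating the window costates shows that `(ω, λ_{t+l})` lies in the kernel
of `H(t,l)`. At `l = l_min(t)` that kernel is a line because the rank is `r+n-1`, so every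
nonzero kernel vector is a nonzero multiple of `(ω, λ_{t+l})`.
-/

theorem Matrix.exists_smul_eq_of_rank_eq_card_sub_one {K ι κ : Type*} [Field K] [Fintype ι]
    [Fintype κ] (M : Matrix ι κ K) (hM : M.rank = Fintype.card κ - 1) {z w : κ → K}
    (hz : M *ᵥ z = 0) (hz0 : z ≠ 0) (hw : M *ᵥ w = 0) (hw0 : w ≠ 0) :
    ∃ c : K, c ≠ 0 ∧ w = c • z := by
  let z' : LinearMap.ker M.mulVecLin := ⟨z, hz⟩
  have hz'0 : z' ≠ 0 := Subtype.coe_ne_coe.mp hz0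
  have hker : Module.finrank K (LinearMap.ker M.mulVecLin) = 1 := by
    have := LinearMap.finrank_range_add_finrank_ker M.mulVecLin
    have := (Module.finrank_pos_iff_exists_ne_zero (R := K)).mpr ⟨z', hz'0⟩
    rw [Module.finrank_fintype_fun_eq_card] at *
    change M.rank + _ = _ at *
    omega
  obtain ⟨c, hc⟩ := (finrank_eq_one_iff_of_nonzero' z' hz'0).mp hker ⟨w, hw⟩
  replace hc : c • z = w := congrArg Subtype.val hc
  exact ⟨c, by rintro rfl; simp [← hc] at hw0, hc.symm⟩

section Window

variable (A : ℕ → Matrix (Fin n) (Fin n) ℝ) (B : ℕ → Matrix (Fin n) (Fin m) ℝ)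
  (G : ℕ → Matrix (Fin r) (Fin n) ℝ) (D : ℕ → Matrix (Fin r) (Fin m) ℝ) (t l : ℕ)

theorem Fx_det : (Fx A t l).det = 1 := by
  have htri : (Fx A t l).BlockTriangular Prod.fst := by
    intro i j (h : j.1 < i.1)
    simp only [Fx, if_neg h.ne', ite_eq_right_iff]
    omega
  rw [htri.det, Finset.prod_eq_one]
  intro k _
  convert det_one (R := ℝ) (n := {a : Fin l × Fin n // a.1 = k})
  ext ⟨i, hi⟩ ⟨j, hj⟩
  simp only [toSquareBlock_def, Fx, of_apply, one_apply, hi.trans hj.symm, if_true,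
    Subtype.mk.injEq, Prod.ext_iff, true_and]

theorem Fx_mulVec_stackVec (lam : ℕ → Fin n → ℝ) (i : Fin l) (p : Fin n) :
    (Fx A t l *ᵥ stackVec lam t l) (i, p) =
      lam (t + i) p - if (i : ℕ) + 1 < l then ((A (t + i))ᵀ *ᵥ lam (t + i + 1)) p else 0 := by
  simp only [mulVec, dotProduct, Fx, Fintype.sum_prod_type, stackVec]
  split_ifs with h
  · have hij : i ≠ ⟨i + 1, h⟩ := by simp [Fin.ext_iff]
    rw [Fintype.sum_eq_add i ⟨i + 1, h⟩ hij]
    · simp [hij, add_assoc, sub_eq_add_neg]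
    · rintro x ⟨hxi, hxj⟩
      simp [Ne.symm hxi, Fin.ext_iff.not.mp hxj]
  · rw [Fintype.sum_eq_single i]
    · simp
    · intro x hx
      have : (x : ℕ) ≠ i + 1 := by omega
      simp [Ne.symm hx, this]

theorem Fu_mulVec_stackVec (lam : ℕ → Fin n → ℝ) (i : Fin l) (p : Fin m) :
    (Fu B t l *ᵥ stackVec lam t l) (i, p) = ((B (t + i))ᵀ *ᵥ lam (t + i)) p := by
  simp [mulVec, dotProduct, Fu, Fintype.sum_prod_type, stackVec, ite_mul]

theorem Phix_mulVec (ω : Fin r → ℝ) (i : Fin l) (p : Fin n) :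
    (Phix G t l *ᵥ ω) (i, p) = ((G (t + i))ᵀ *ᵥ ω) p := rfl

theorem Phiu_mulVec (ω : Fin r → ℝ) (i : Fin l) (p : Fin m) :
    (Phiu D t l *ᵥ ω) (i, p) = ((D (t + i))ᵀ *ᵥ ω) p := rfl

theorem Vm_mulVec (μ : Fin n → ℝ) (i : Fin l) (p : Fin n) :
    (Vm A t l *ᵥ μ) (i, p) = if (i : ℕ) = l - 1 then ((A (t + l - 1))ᵀ *ᵥ μ) p else 0 := by
  split_ifs with h <;> simp [mulVec, dotProduct, Vm, h]

theorem Hm_mulVec_eq_zero_of_costate_recursion (ω : Fin r → ℝ) (μ : ℕ → Fin n → ℝ)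
    (hcostate : ∀ k, t ≤ k → k < t + l → μ k = (A k)ᵀ *ᵥ μ (k + 1) + (G k)ᵀ *ᵥ ω)
    (hcontrol : ∀ k, t ≤ k → k < t + l → (B k)ᵀ *ᵥ μ k + (D k)ᵀ *ᵥ ω = 0) :
    Hm A B G D t l *ᵥ Sum.elim ω (μ (t + l)) = 0 := by
  have hx : Fx A t l *ᵥ stackVec μ t l = Phix G t l *ᵥ ω + Vm A t l *ᵥ μ (t + l) := by
    ext ⟨i, p⟩
    have hi := congrFun (hcostate (t + i) (by omega) (by omega)) p
    rw [Fx_mulVec_stackVec, Pi.add_apply, Phix_mulVec, Vm_mulVec]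
    split_ifs with h₁ h₂ h₂
    · omega
    · simp only [Pi.add_apply] at hi
      linarith
    · have hlast : t + l - 1 = t + i := by omega
      rw [hlast, show t + l = t + i + 1 by omega, hi]
      simp only [Pi.add_apply]
      ring
    · omega
  have hu : Fu B t l *ᵥ stackVec μ t l + Phiu D t l *ᵥ ω = 0 := by
    ext ⟨i, p⟩
    rw [Pi.add_apply, Fu_mulVec_stackVec, Phiu_mulVec]
    exact congrFun (hcontrol (t + i) (by omega) (by omega)) p
  have hsolve : (Fx A t l)⁻¹ *ᵥ (Phix G t l *ᵥ ω + Vm A t l *ᵥ μ (t + l)) = stackVec μ t l := by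
    rw [← hx, mulVec_mulVec, nonsing_inv_mul _ (by simp [Fx_det]), one_mulVec]
  calc Hm A B G D t l *ᵥ Sum.elim ω (μ (t + l))
      = Fu B t l *ᵥ ((Fx A t l)⁻¹ *ᵥ (Phix G t l *ᵥ ω + Vm A t l *ᵥ μ (t + l)))
          + Phiu D t l *ᵥ ω := by
        simp only [Hm, H1m, H2m, fromCols_mulVec_sumElim, add_mulVec, ← mulVec_mulVec, mulVec_add]
        abel
    _ = 0 := by rw [hsolve, hu]

end Window

def extendCostate (T : ℕ) (lam : ℕ → Fin n → ℝ) : ℕ → Fin n → ℝ :=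
  fun k => if k ≤ T then lam k else 0

section KKT

variable {A : ℕ → Matrix (Fin n) (Fin n) ℝ} {B : ℕ → Matrix (Fin n) (Fin m) ℝ}
  {G : ℕ → Matrix (Fin r) (Fin n) ℝ} {D : ℕ → Matrix (Fin r) (Fin m) ℝ} {T : ℕ}
  {ω : Fin r → ℝ} {lam : ℕ → Fin n → ℝ}

theorem KKT.costate_recursion (h : KKT A B G D T ω lam) {k : ℕ} (hk : 1 ≤ k) (hkT : k ≤ T) :
    extendCostate T lam k = (A k)ᵀ *ᵥ extendCostate T lam (k + 1) + (G k)ᵀ *ᵥ ω := by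
  obtain ⟨j, rfl⟩ := Nat.exists_eq_add_of_le hk
  ext p
  have hj := congrFun (neg_add_eq_zero.mp h.1) (⟨j, by omega⟩, p)
  rw [Fx_mulVec_stackVec, Phix_mulVec] at hj
  dsimp only at hj
  simp only [extendCostate, if_pos hkT, Pi.add_apply]
  by_cases hnext : 1 + j + 1 ≤ T
  · rw [if_pos hnext]
    rw [if_pos (by omega)] at hj
    linarith
  · rw [if_neg hnext, mulVec_zero, Pi.zero_apply, zero_add]
    rwa [if_neg (by omega), sub_zero] at hj

theorem KKT.control_stationarity (h : KKT A B G D T ω lam) {k : ℕ} (hk : 1 ≤ k) (hkT : k ≤ T) :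
    (B k)ᵀ *ᵥ extendCostate T lam k + (D k)ᵀ *ᵥ ω = 0 := by
  obtain ⟨j, rfl⟩ := Nat.exists_eq_add_of_le hk
  ext p
  have hj := congrFun h.2 (⟨j, by omega⟩, p)
  rw [Pi.add_apply, Fu_mulVec_stackVec, Phiu_mulVec] at hj
  simpa [extendCostate, if_pos hkT] using hj

end KKT

theorem minimal_observation_IOC_general (n m r T : ℕ)
    (A : ℕ → Matrix (Fin n) (Fin n) ℝ) (B : ℕ → Matrix (Fin n) (Fin m) ℝ)
    (G : ℕ → Matrix (Fin r) (Fin n) ℝ) (D : ℕ → Matrix (Fin r) (Fin m) ℝ)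
    (ω : Fin r → ℝ) (hω : ω ≠ 0)
    (lam : ℕ → Fin n → ℝ) (hKKT : KKT A B G D T ω lam)
    (t : ℕ) (ht : 1 ≤ t) (htT : t < T)
    (hne : {l : ℕ | 1 ≤ l ∧ l ≤ T - t + 1 ∧ (Hm A B G D t l).rank = r + n - 1}.Nonempty) :
    ∀ (ωh : Fin r → ℝ) (lamh : Fin n → ℝ),
      Hm A B G D t (sInf {l : ℕ | 1 ≤ l ∧ l ≤ T - t + 1 ∧
          (Hm A B G D t l).rank = r + n - 1}) *ᵥ Sum.elim ωh lamh = 0 →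
      Sum.elim ωh lamh ≠ 0 →
      ∃ c : ℝ, c ≠ 0 ∧ ωh = c • ω := by
  intro ωh lamh hker hne0
  obtain ⟨-, hlT, hrank⟩ := Nat.sInf_mem hne
  set l := sInf {l : ℕ | 1 ≤ l ∧ l ≤ T - t + 1 ∧ (Hm A B G D t l).rank = r + n - 1}
  have hwindow := Hm_mulVec_eq_zero_of_costate_recursion A B G D t l ω (extendCostate T lam)
    (fun k hk hkl => hKKT.costate_recursion (by omega) (by omega))
    (fun k hk hkl => hKKT.control_stationarity (by omega) (by omega))
  have hωμ : Sum.elim ω (extendCostate T lam (t + l)) ≠ 0 :=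
    fun h => hω (funext fun i => congrFun h (Sum.inl i))
  obtain ⟨c, hc0, hc⟩ := (Hm A B G D t l).exists_smul_eq_of_rank_eq_card_sub_one
    (by simpa using hrank) hwindow hωμ hker hne0
  exact ⟨c, hc0, funext fun i => by simpa using congrFun hc (Sum.inl i)⟩

/-- Corollary 2 (minimal observation IOC): with `l_min(t)` the least `l` in the nonempty set
`L = {l : 1 ≤ l ≤ T−t+1, rank H(t,l) = r+n−1}`, every nonzero kernel element
`(ω̂, λ̂)` of `H(t, l_min(t))` satisfies `ω̂ = c·ω` for some `c ≠ 0`. -/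
theorem minimal_observation_IOC (n m r T : ℕ) (hn : 0 < n) (hm : 0 < m) (hr : 0 < r) (hT : 1 ≤ T)
    (A : ℕ → Matrix (Fin n) (Fin n) ℝ) (B : ℕ → Matrix (Fin n) (Fin m) ℝ)
    (G : ℕ → Matrix (Fin r) (Fin n) ℝ) (D : ℕ → Matrix (Fin r) (Fin m) ℝ)
    (hAT : A T = 1)
    (S : Finset (Fin r)) (ω : Fin r → ℝ) (hω : ω ≠ 0) (hsupp : ∀ i ∉ S, ω i = 0)
    (lam : ℕ → Fin n → ℝ) (hKKT : KKT A B G D T ω lam)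
    (t : ℕ) (ht : 1 ≤ t) (htT : t < T)
    (hne : {l : ℕ | 1 ≤ l ∧ l ≤ T - t + 1 ∧ (Hm A B G D t l).rank = r + n - 1}.Nonempty) :
    ∀ (ωh : Fin r → ℝ) (lamh : Fin n → ℝ),
      Hm A B G D t (sInf {l : ℕ | 1 ≤ l ∧ l ≤ T - t + 1 ∧
          (Hm A B G D t l).rank = r + n - 1}) *ᵥ Sum.elim ωh lamh = 0 →
      Sum.elim ωh lamh ≠ 0 →
      ∃ c : ℝ, c ≠ 0 ∧ ωh = c • ω :=
  minimal_observation_IOC_general n m r T A B G D ω hω lam hKKT t ht htT hne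

end
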